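/- arXiv:2009.04937 — 2 statements merged into one kernel-verified Lean document; each statement's English description precedes it below -/
import Mathlib

section
/- Let ψ be an endomorphism of the free group F = F(a,b) and let M_ψ = ⟨a, b, t | t⁻¹at = ψ(a), t⁻¹bt = ψ(b)⟩ be its mapping torus. If there exist k ∈ ℤ \ {0} and w ∈ F \ {1} with ψ^k(w) conjugate to w in F, then M_ψ contains a subgroup isomorphic to ℤ × ℤ. -/
/-- Relations of the mapping torus of an endomorphism `ψ` of `F(a,b)`:
`t⁻¹ x t = ψ(x)` for each generator `x`, where `none` plays the role of `t`
and `some x` the role of the generator `x` of `F(a,b)`. -/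
def mappingTorusRels (ψ : FreeGroup Bool →* FreeGroup Bool) :
    Set (FreeGroup (Option Bool)) :=
  Set.range fun x : Bool =>
    (FreeGroup.of (none : Option Bool))⁻¹ * FreeGroup.of (some x) *
      FreeGroup.of (none : Option Bool) *
      (FreeGroup.map some (ψ (FreeGroup.of x)))⁻¹

/-- The mapping torus `M_ψ = ⟨a, b, t ∣ a^t = ψ(a), b^t = ψ(b)⟩`. -/
abbrev MappingTorus (ψ : FreeGroup Bool →* FreeGroup Bool) :=
  PresentedGroup (mappingTorusRels ψ)

/-!
Write `c ψ^k(w) c⁻¹ = w`. Conjugating by `t^k` applies `ψ^k`, so `u = t^k c⁻¹` commutes with `w`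
in `M_ψ`. If `u^a w^b = 1`, the exponent sum of `t` gives `a = 0`. To see that `w` has infinite
order, note that `F` need not embed in `M_ψ` (`ψ` need not be injective); instead map `M_ψ` to
`Γ ⋊ ℤ`, where `Γ` is the group of germs at `+∞` of integer-indexed sequences in `F`, `x ∈ F`
goes to the germ of its orbit `(ψ^n x)_n`, and `t` acts by the shift (a model of the direct limit
of `F → F → ⋯` along `ψ`). If `w^b` dies there, then `(ψ^n w)^b = 1` for some `n`. But
`ψ^n w ≠ 1`, because `ψ^{kn} w` is conjugate to `w ≠ 1`, and free groups are torsion-free.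
-/

open Filter SemidirectProduct Multiplicative

namespace Filter.Germ

variable {α β G : Type*} [Group G] {la : Filter α} {lb : Filter β}

def compEquiv (e : α ≃ β) (he : Tendsto e la lb) (he' : Tendsto e.symm lb la) :
    Germ lb G ≃* Germ la G where
  toFun f := f.compTendsto e he
  invFun f := f.compTendsto e.symm he'
  left_inv f := f.inductionOn fun f => by simp [Function.comp_assoc]
  right_inv f := f.inductionOn fun f => by simp [Function.comp_assoc]
  map_mul' f g := f.inductionOn₂ g fun f g => rfl

noncomputable def shift : Germ (atTop : Filter ℤ) G ≃* Germ (atTop : Filter ℤ) G :=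
  compEquiv (Equiv.addRight 1) (tendsto_atTop_add_const_right atTop (1 : ℤ) tendsto_id)
    (tendsto_atTop_add_const_right atTop (-1 : ℤ) tendsto_id)

abbrev ShiftProduct (G : Type*) [Group G] : Type _ :=
  Germ (atTop : Filter ℤ) G ⋊[zpowersHom _ shift] Multiplicative ℤ

end Filter.Germ

namespace Monoid.End

variable {G : Type*} [Group G] (ψ : Monoid.End G)

noncomputable def orbitGerm : G →* Germ (atTop : Filter ℤ) G :=
  (Germ.coeMulHom atTop).comp (MonoidHom.pi fun n : ℤ => ψ ^ n.toNat)

theorem orbitGerm_apply (x : G) : ψ.orbitGerm x = ↑(fun n : ℤ => (ψ ^ n.toNat) x) := rfl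

theorem shift_orbitGerm (x : G) : Germ.shift (ψ.orbitGerm x) = ψ.orbitGerm (ψ x) := by
  refine Germ.coe_eq.2 ((eventually_ge_atTop 0).mono fun n hn => ?_)
  change (ψ ^ (n + 1).toNat) x = (ψ ^ n.toNat) (ψ x)
  rw [show (n + 1).toNat = n.toNat + 1 by omega, pow_succ]
  rfl

/-- The image of `t` is the inverse generator, as `inr g * inl n * (inr g)⁻¹ = inl (φ g n)`. -/
theorem inv_mul_inl_orbitGerm_mul (x : G) :
    ((inr (ofAdd 1))⁻¹ : Germ.ShiftProduct G)⁻¹ * inl (ψ.orbitGerm x) * (inr (ofAdd 1))⁻¹ =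
      inl (ψ.orbitGerm (ψ x)) := by
  rw [inv_inv, ← map_inv, ← inl_aut, zpowersHom_apply, toAdd_ofAdd, zpow_one, shift_orbitGerm]

theorem not_isOfFinOrder_orbitGerm [IsMulTorsionFree G] {x : G} (hx : ∀ p : ℕ, (ψ ^ p) x ≠ 1) :
    ¬IsOfFinOrder (ψ.orbitGerm x) := by
  rintro ⟨n, hn, hxn⟩
  rw [isPeriodicPt_mul_iff_pow_eq_one, ← map_pow, orbitGerm_apply, ← Germ.coe_one,
    Germ.coe_eq] at hxn
  obtain ⟨m, hm⟩ := hxn.exists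
  exact hx m.toNat ((pow_eq_one_iff_left hn.ne').1 (by simpa using hm))

theorem isConj_pow_mul_apply {k : ℕ} {w : G} (h : IsConj ((ψ ^ k) w) w) (n : ℕ) :
    IsConj ((ψ ^ (k * n)) w) w := by
  induction n with
  | zero => rw [mul_zero, pow_zero]; exact IsConj.refl w
  | succ n ih =>
    rw [mul_add_one, pow_add, Monoid.End.coe_mul, Function.comp_apply]
    exact ((ψ ^ (k * n)).map_isConj h).trans ih

theorem pow_apply_ne_one_of_isConj {k : ℕ} (hk : k ≠ 0) {w : G} (hw : w ≠ 1)
    (h : IsConj ((ψ ^ k) w) w) (p : ℕ) : (ψ ^ p) w ≠ 1 := by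
  intro hp
  have hkp : k * p = (k * p - p) + p := by
    have := Nat.le_mul_of_pos_left p (Nat.pos_of_ne_zero hk); omega
  have := ψ.isConj_pow_mul_apply h p
  rw [hkp, pow_add, Monoid.End.coe_mul, Function.comp_apply, hp, map_one, isConj_one_right] at this
  exact hw this

end Monoid.End

theorem exists_subgroup_mulEquiv_int_prod_int {H K : Type*} [Group H] [Group K] {u v : H}
    (huv : Commute u v) (ρ : H →* K) (hρv : ρ v = 1) (hu : ¬IsOfFinOrder (ρ u))
    (hv : ¬IsOfFinOrder v) : ∃ S : Subgroup H, Nonempty (S ≃* Multiplicative (ℤ × ℤ)) := by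
  let f : Multiplicative ℤ × Multiplicative ℤ →* H :=
    (zpowersHom H u).noncommCoprod (zpowersHom H v) fun a b => huv.zpow_zpow a.toAdd b.toAdd
  have hf : Function.Injective f := by
    refine (injective_iff_map_eq_one f).2 fun ⟨a, b⟩ hab => ?_
    change u ^ a.toAdd * v ^ b.toAdd = 1 at hab
    have ha : a.toAdd = 0 := injective_zpow_iff_not_isOfFinOrder.2 hu <| by
      simpa [hρv] using congrArg ρ hab
    have hb : b.toAdd = 0 := injective_zpow_iff_not_isOfFinOrder.2 hv <| by
      simpa [ha] using hab
    simp [Prod.ext_iff, ← toAdd_eq_zero, ha, hb]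
  exact ⟨f.range, ⟨(MonoidHom.ofInjective hf).symm.trans (MulEquiv.prodMultiplicative ℤ ℤ).symm⟩⟩

theorem commute_pow_mul_inv_of_conj_eq {G H : Type*} [Group G] [Group H] (ψ : Monoid.End G)
    (ι : G →* H) (τ : H) (hτ : ∀ x, τ⁻¹ * ι x * τ = ι (ψ x)) {k : ℕ} {c w : G}
    (hc : c * (ψ ^ k) w * c⁻¹ = w) : Commute (τ ^ k * (ι c)⁻¹) (ι w) := by
  have hτk : ∀ (n : ℕ) (x : G), (τ ^ n)⁻¹ * ι x * τ ^ n = ι ((ψ ^ n) x) := by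
    intro n
    induction n with
    | zero => simp
    | succ n ih =>
      intro x
      rw [pow_succ, pow_succ', Monoid.End.coe_mul, Function.comp_apply, ← hτ, ← ih]
      group
  have : ι w = ι c * ((τ ^ k)⁻¹ * ι w * τ ^ k) * (ι c)⁻¹ := by
    rw [hτk, ← map_inv, ← map_mul, ← map_mul, hc]
  calc τ ^ k * (ι c)⁻¹ * ι w
      = τ ^ k * (ι c)⁻¹ * (ι c * ((τ ^ k)⁻¹ * ι w * τ ^ k) * (ι c)⁻¹) := by rw [← this]
    _ = ι w * (τ ^ k * (ι c)⁻¹) := by group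

namespace MappingTorus

variable (ψ : FreeGroup Bool →* FreeGroup Bool)

def of : FreeGroup Bool →* MappingTorus ψ :=
  (PresentedGroup.mk _).comp (FreeGroup.map some)

def t : MappingTorus ψ := PresentedGroup.of none

theorem of_of (b : Bool) : of ψ (FreeGroup.of b) = PresentedGroup.of (some b) := rfl

theorem t_inv_mul_of_mul_t (x : FreeGroup Bool) : (t ψ)⁻¹ * of ψ x * t ψ = of ψ (ψ x) := by
  suffices (MulAut.conj (t ψ)⁻¹).toMonoidHom.comp (of ψ) = (of ψ).comp ψ by
    simpa using DFunLike.congr_fun this x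
  refine FreeGroup.ext_hom _ _ fun b => ?_
  have := PresentedGroup.one_of_mem (rels := mappingTorusRels ψ) ⟨b, rfl⟩
  simp only [map_mul, map_inv, mul_inv_eq_one] at this
  exact this

variable {ψ} {H : Type*} [Group H] (ι : FreeGroup Bool →* H) (τ : H)

def lift (hτ : ∀ x, τ⁻¹ * ι x * τ = ι (ψ x)) : MappingTorus ψ →* H :=
  PresentedGroup.toGroup (f := fun o => o.elim τ (ι ∘ FreeGroup.of)) <| by
    rintro _ ⟨b, rfl⟩
    have : (FreeGroup.lift fun o => o.elim τ (ι ∘ FreeGroup.of)).comp (FreeGroup.map some) = ι :=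
      FreeGroup.ext_hom _ _ fun _ => by simp
    simp only [map_mul, map_inv, FreeGroup.lift_apply_of, mul_inv_eq_one]
    rw [← MonoidHom.comp_apply, this]
    exact hτ _

variable (hτ : ∀ x, τ⁻¹ * ι x * τ = ι (ψ x))

theorem lift_t : lift ι τ hτ (t ψ) = τ := PresentedGroup.toGroup.of _

theorem lift_of (x : FreeGroup Bool) : lift ι τ hτ (of ψ x) = ι x := by
  suffices (lift ι τ hτ).comp (of ψ) = ι from DFunLike.congr_fun this x
  refine FreeGroup.ext_hom _ _ fun b => ?_
  rw [MonoidHom.comp_apply, of_of]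
  exact PresentedGroup.toGroup.of _

end MappingTorus

theorem stmt9 (ψ : Monoid.End (FreeGroup Bool)) (k : ℕ) (hk : k ≠ 0)
    (w : FreeGroup Bool) (hw : w ≠ 1) (hconj : IsConj ((ψ ^ k) w) w) :
    ∃ H : Subgroup (MappingTorus ψ), Nonempty (H ≃* Multiplicative (ℤ × ℤ)) := by
  obtain ⟨c, hc⟩ := isConj_iff.1 hconj
  let Φ : MappingTorus ψ →* Germ.ShiftProduct (FreeGroup Bool) :=
    MappingTorus.lift (inl.comp ψ.orbitGerm) _ (Monoid.End.inv_mul_inl_orbitGerm_mul ψ)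
  have hΦt : Φ (MappingTorus.t ψ) = (inr (ofAdd 1))⁻¹ := MappingTorus.lift_t _ _ _
  have hΦof (x : FreeGroup Bool) : Φ (MappingTorus.of ψ x) = inl (ψ.orbitGerm x) :=
    MappingTorus.lift_of _ _ _ x
  refine exists_subgroup_mulEquiv_int_prod_int
    (commute_pow_mul_inv_of_conj_eq ψ _ _ (MappingTorus.t_inv_mul_of_mul_t ψ) hc)
    (rightHom.comp Φ) ?_ ?_ ?_
  · simp [hΦof]
  · refine not_isOfFinOrder_of_isMulTorsionFree ?_
    rw [MonoidHom.comp_apply, map_mul, map_pow, map_inv, hΦt, hΦof, map_mul, map_pow, map_inv,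
      map_inv, rightHom_inr, rightHom_inl, inv_one, mul_one, ← ofAdd_neg, ← ofAdd_nsmul]
    simpa using hk
  · intro hfin
    have := Φ.isOfFinOrder hfin
    rw [hΦof, inl_injective.isOfFinOrder_iff] at this
    exact Monoid.End.not_isOfFinOrder_orbitGerm ψ (ψ.pow_apply_ne_one_of_isConj hk hw hconj) this
end

section
/- Let ψ : F(a,b) → F(a,b) be an endomorphism satisfying ψ(a) = P⁻¹aP and ψ(b) = Q for given words P, Q, and let Z := PQP⁻¹ and φ_Z be the endomorphism a ↦ a, b ↦ Z. Then there exist W ∈ F(a,b) and k ∈ ℤ with P = φ_Z(W) a^k W⁻¹ if and only if the conjugacy class of a contains a fixed point of ψ. Moreover, if P = φ_Z(W) a^k W⁻¹ then W a W⁻¹ is fixed by ψ. -/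
/-- The endomorphism `φ_Z` of `F(a,b)` with `a ↦ a`, `b ↦ Z`
(here `a := of false`, `b := of true`). -/
def phiZ (Z : FreeGroup Bool) : FreeGroup Bool →* FreeGroup Bool :=
  FreeGroup.lift fun t : Bool => if t then Z else FreeGroup.of false

/-!
Both `ψ` and `w ↦ P⁻¹ φ_Z(w) P` send `a ↦ P⁻¹aP` and `b ↦ Q`, so they agree. Hence, since
`φ_Z` fixes `a`, the conjugate `WaW⁻¹` is fixed by `ψ` exactly when `W⁻¹P⁻¹φ_Z(W)` commutes
with `a`. In a free group the centralizer of a generator `a` is `⟨a⟩`, so this says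
`W⁻¹P⁻¹φ_Z(W) = a^m`, i.e. `P = φ_Z(W) a^(-m) W⁻¹`.
-/

namespace FreeGroup

variable {α : Type*} {x : α}

theorem mk_singleton_mem_zpowers_of (b : Bool) : mk [(x, b)] ∈ Subgroup.zpowers (of x) := by
  cases b
  · simpa [of, inv_mk, invRev] using Subgroup.inv_mem _ (Subgroup.mem_zpowers (of x))
  · exact Subgroup.mem_zpowers (of x)

variable [DecidableEq α] {g : FreeGroup α}

theorem toWord_of_mul (h : ∀ b, g.toWord.head? ≠ some (x, b)) :
    (of x * g).toWord = (x, true) :: g.toWord := by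
  rw [toWord_mul, toWord_of]
  apply IsReduced.reduce_eq
  rcases hL : g.toWord with _ | ⟨⟨y, c⟩, t⟩
  · exact IsReduced.singleton
  · refine isReduced_cons_cons.2 ⟨fun (hy : x = y) => ?_, hL ▸ isReduced_toWord⟩
    exact absurd (by rw [hL, hy]; rfl) (h c)

theorem toWord_mul_of (h : ∀ b, g.toWord.getLast? ≠ some (x, b)) :
    (g * of x).toWord = g.toWord ++ [(x, true)] := by
  rw [toWord_mul, toWord_of]
  apply IsReduced.reduce_eq
  rcases List.eq_nil_or_concat' g.toWord with hL | ⟨t, ⟨y, c⟩, hL⟩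
  · rw [hL]; exact IsReduced.singleton
  · rw [hL]
    refine IsReduced.append_overlap (hL ▸ isReduced_toWord) ?_ (List.cons_ne_nil _ _)
    refine isReduced_cons_cons.2 ⟨fun (hy : y = x) => ?_, IsReduced.singleton⟩
    exact absurd (by rw [hL, hy]; simp) (h c)

/- Induction on the length of `g`: a letter `x^±1` at either end of `g` can be split off, and
if there is none, `of x * g` and `g * of x` are reduced as written and cannot be equal. -/
theorem centralizer_singleton_of : Subgroup.centralizer {of x} = Subgroup.zpowers (of x) := by
  set H := Subgroup.zpowers (of x)
  have hHC : H ≤ Subgroup.centralizer {of x} :=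
    Subgroup.zpowers_le.2 (Subgroup.mem_centralizer_singleton_iff.2 rfl)
  refine le_antisymm (fun g hg => ?_) hHC
  induction hn : g.norm using Nat.strong_induction_on generalizing g with
  | _ n ih =>
  have peel : ∀ {m : FreeGroup α} (k : FreeGroup α), m ∈ H → (g = m * k ∨ g = k * m) →
      k.norm < n → g ∈ H := by
    rintro m k hm (rfl | rfl) hk
    · refine H.mul_mem hm (ih _ hk _ ?_ rfl)
      simpa using (Subgroup.centralizer {of x}).mul_mem (hHC (H.inv_mem hm)) hg
    · refine H.mul_mem (ih _ hk _ ?_ rfl) hm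
      simpa using (Subgroup.centralizer {of x}).mul_mem hg (hHC (H.inv_mem hm))
  by_cases hhead : ∃ b, g.toWord.head? = some (x, b)
  · obtain ⟨b, t, ht⟩ := hhead.imp fun _ => List.head?_eq_some_iff.1
    refine peel (mk t) (mk_singleton_mem_zpowers_of b) (Or.inl ?_) ?_
    · rw [mul_mk, List.singleton_append, ← ht, mk_toWord]
    · exact norm_mk_le.trans_lt (by simp [← hn, norm, ht])
  by_cases hlast : ∃ b, g.toWord.getLast? = some (x, b)
  · obtain ⟨b, t, ht⟩ := hlast.imp fun _ => List.getLast?_eq_some_iff.1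
    refine peel (mk t) (mk_singleton_mem_zpowers_of b) (Or.inr ?_) ?_
    · rw [mul_mk, ← ht, mk_toWord]
    · exact norm_mk_le.trans_lt (by simp [← hn, norm, ht])
  push Not at hhead hlast
  have hcomm : (x, true) :: g.toWord = g.toWord ++ [(x, true)] := by
    rw [← toWord_of_mul hhead, ← toWord_mul_of hlast, Subgroup.mem_centralizer_singleton_iff.1 hg]
  rcases hL : g.toWord with _ | ⟨c, t⟩
  · simp [toWord_eq_nil_iff.1 hL]
  · rw [hL] at hcomm hhead
    simp only [List.cons_append, List.cons.injEq] at hcomm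
    exact absurd (by simp [← hcomm.1]) (hhead true)

end FreeGroup

section

variable {G : Type*} [Group G] {ψ φ : G →* G} {a P : G}

theorem apply_conj_eq_self_of_eq_map_mul_zpow_mul_inv (hψ : ∀ w, ψ w = P⁻¹ * φ w * P)
    (ha : φ a = a) {W : G} {k : ℤ} (hP : P = φ W * a ^ k * W⁻¹) :
    ψ (W * a * W⁻¹) = W * a * W⁻¹ := by
  rw [hψ, map_mul, map_mul, map_inv, ha, hP]
  group

theorem exists_eq_map_mul_zpow_mul_inv_of_apply_eq_self (hψ : ∀ w, ψ w = P⁻¹ * φ w * P)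
    (ha : φ a = a) (hC : Subgroup.centralizer {a} ≤ Subgroup.zpowers a) {x : G}
    (hx : IsConj a x) (hfix : ψ x = x) : ∃ (W : G) (k : ℤ), P = φ W * a ^ k * W⁻¹ := by
  obtain ⟨V, rfl⟩ := isConj_iff.1 hx
  rw [hψ, map_mul, map_mul, map_inv, ha] at hfix
  have hcomm : V⁻¹ * P⁻¹ * φ V ∈ Subgroup.centralizer {a} := by
    rw [Subgroup.mem_centralizer_singleton_iff]
    calc V⁻¹ * P⁻¹ * φ V * a = V⁻¹ * (P⁻¹ * (φ V * a * (φ V)⁻¹) * P) * (P⁻¹ * φ V) := by group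
      _ = a * (V⁻¹ * P⁻¹ * φ V) := by rw [hfix]; group
  obtain ⟨m, hm⟩ := Subgroup.mem_zpowers_iff.1 (hC hcomm)
  refine ⟨V, -m, ?_⟩
  rw [zpow_neg, hm]
  group

end

@[simp]
theorem phiZ_of_false (Z : FreeGroup Bool) : phiZ Z (FreeGroup.of false) = FreeGroup.of false :=
  rfl

@[simp]
theorem phiZ_of_true (Z : FreeGroup Bool) : phiZ Z (FreeGroup.of true) = Z := by
  simp [phiZ]

theorem apply_eq_conj_phiZ {ψ : FreeGroup Bool →* FreeGroup Bool} {P Q : FreeGroup Bool}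
    (hA : ψ (FreeGroup.of false) = P⁻¹ * FreeGroup.of false * P)
    (hB : ψ (FreeGroup.of true) = Q) (w : FreeGroup Bool) :
    ψ w = P⁻¹ * phiZ (P * Q * P⁻¹) w * P := by
  suffices ψ = (MulAut.conj P⁻¹).toMonoidHom.comp (phiZ (P * Q * P⁻¹)) by simp [this]
  refine FreeGroup.ext_hom _ _ fun t => ?_
  cases t
  · simp [hA]
  · simp [hB]; group

theorem stmt12 (ψ : FreeGroup Bool →* FreeGroup Bool) (P Q : FreeGroup Bool)
    (hA : ψ (FreeGroup.of false) = P⁻¹ * FreeGroup.of false * P)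
    (hB : ψ (FreeGroup.of true) = Q) :
    ((∃ (W : FreeGroup Bool) (k : ℤ),
        P = phiZ (P * Q * P⁻¹) W * (FreeGroup.of false) ^ k * W⁻¹) ↔
      (∃ x : FreeGroup Bool, IsConj (FreeGroup.of false) x ∧ ψ x = x)) ∧
    ∀ (W : FreeGroup Bool) (k : ℤ),
      P = phiZ (P * Q * P⁻¹) W * (FreeGroup.of false) ^ k * W⁻¹ →
        ψ (W * FreeGroup.of false * W⁻¹) = W * FreeGroup.of false * W⁻¹ := by
  have hψ := apply_eq_conj_phiZ hA hB
  have ha := phiZ_of_false (P * Q * P⁻¹)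
  have hfix W k := apply_conj_eq_self_of_eq_map_mul_zpow_mul_inv (W := W) (k := k) hψ ha
  refine ⟨⟨fun ⟨W, k, hP⟩ => ⟨_, isConj_iff.2 ⟨W, rfl⟩, hfix W k hP⟩, fun ⟨x, hx, hx'⟩ => ?_⟩, hfix⟩
  exact exists_eq_map_mul_zpow_mul_inv_of_apply_eq_self hψ ha
    FreeGroup.centralizer_singleton_of.le hx hx'
end
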